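/- Let B₀ ∈ (0, π/4) and suppose (A, B) is a C² solution on [0, τ*) of the system B'' = -B'/τ + 2cot(2B)(B')² - 2tan(2B)(A')², A'' = -A'/τ - sin(4B)/(πτ) + 2cot(2B)A'B' - 2tan(2B)A'B', with B(0) = B₀, B'(0) = 0, A(0) = 0, A'(0) = -sin(4B₀)/π, and B(τ) > 0 on [0, τ*). Then B'(τ) ≤ 0 and B(τ) ≤ B₀ for all τ ∈ [0, τ*). -/

import Mathlib

/-!
With `w τ = τ B'(τ)` the equation for `B` becomes the linear equation
`w' = 2 cot (2B) B' w - 2 τ tan (2B) (A')²` with `w 0 = 0`. While `0 < B ≤ π/4` the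
forcing term is nonpositive, so an integrating factor gives `w ≤ 0`: `B' ≤ 0` and `B`
decreases from `B₀ < π/4`. Hence `B` never reaches `π/4`, and the argument applies on
all of `[0, τ*)`.
-/

open Real Set Topology Filter

theorem le_of_forall_Icc_le_imp_le {f : ℝ → ℝ} {a b m M : ℝ} (hf : ContinuousOn f (Icc a b))
    (hmM : m < M) (ha : f a ≤ m)
    (h : ∀ T ∈ Icc a b, (∀ s ∈ Icc a T, f s ≤ M) → f T ≤ m) :
    ∀ x ∈ Icc a b, f x ≤ m := by
  suffices hlt : ∀ x ∈ Icc a b, f x < M from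
    fun x hx => h x hx fun s hs => (hlt s ⟨hs.1, hs.2.trans hx.2⟩).le
  by_contra! ⟨x, hx, hMx⟩
  set E := {y ∈ Icc a b | M ≤ f y}
  have hE : IsClosed E := hf.preimage_isClosed_of_isClosed isClosed_Icc isClosed_Ici
  have hEbdd : BddBelow E := ⟨a, fun y hy => hy.1.1⟩
  set T := sInf E
  have hTE : T ∈ E := hE.csInf_mem ⟨x, hx, hMx⟩ hEbdd
  have haT : a < T := hTE.1.1.lt_of_ne fun haT => by linarith [haT ▸ hTE.2]
  have hbefore : ∀ s ∈ Ico a T, f s ≤ M := fun s hs => le_of_lt <| not_le.1 fun hMs =>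
    hs.2.not_ge (csInf_le hEbdd ⟨⟨hs.1, hs.2.le.trans hTE.1.2⟩, hMs⟩)
  have hTM : f T ≤ M :=
    ContinuousWithinAt.closure_le (by rw [closure_Ico haT.ne]; exact right_mem_Icc.2 haT.le)
      ((hf T hTE.1).mono (Ico_subset_Icc_self.trans (Icc_subset_Icc_right hTE.1.2)))
      continuousWithinAt_const hbefore
  have hfT := h T hTE.1 fun s hs =>
    (eq_or_lt_of_le hs.2).elim (· ▸ hTM) fun hsT => hbefore s ⟨hs.1, hsT⟩
  linarith [hTE.2]

theorem nonpos_of_hasDerivAt_eq_mul_sub {w c d : ℝ → ℝ} {a b : ℝ}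
    (hw : ContinuousOn w (Icc a b)) (hc : ContinuousOn c (Icc a b))
    (hw' : ∀ x ∈ Ioo a b, HasDerivAt w (c x * w x - d x) x)
    (hd : ∀ x ∈ Ioo a b, 0 ≤ d x) (ha : w a ≤ 0) : ∀ x ∈ Icc a b, w x ≤ 0 := by
  intro x hx
  have hab : a ≤ b := hx.1.trans hx.2
  set C : ℝ → ℝ := fun y => ∫ s in a..y, c s
  have hC : ContinuousOn C (Icc a b) := by
    simpa only [uIcc_of_le hab] using
      intervalIntegral.continuousOn_primitive_interval (μ := MeasureTheory.volume)
        (a := a) (b := b) (by simpa only [uIcc_of_le hab] using hc.integrableOn_Icc)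
  have hC' : ∀ y ∈ Ioo a b, HasDerivAt C (c y) y := fun y hy =>
    intervalIntegral.integral_hasDerivAt_right
      ((hc.mono (uIcc_of_le hy.1.le ▸ Icc_subset_Icc_right hy.2.le)).intervalIntegrable)
      ((hc.mono Ioo_subset_Icc_self).stronglyMeasurableAtFilter isOpen_Ioo y hy)
      (hc.continuousAt (Icc_mem_nhds hy.1 hy.2))
  -- integrating factor: `(exp (-C) * w)' = -exp (-C) * d ≤ 0`
  have hv : AntitoneOn (fun y => exp (-C y) * w y) (Icc a b) := by
    refine antitoneOn_of_hasDerivWithinAt_nonpos (convex_Icc a b)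
      ((continuous_exp.comp_continuousOn hC.neg).mul hw) (f' := fun y => -(exp (-C y) * d y))
      (fun y hy => ?_) (fun y hy => ?_) <;> rw [interior_Icc] at hy
    · refine ((((hC' y hy).neg.exp).mul (hw' y hy)).congr_deriv ?_).hasDerivWithinAt
      simp only [Pi.neg_apply]; ring
    · exact neg_nonpos.2 (mul_nonneg (exp_pos _).le (hd y hy))
  have hva : exp (-C x) * w x ≤ w a := by
    simpa [C] using hv (left_mem_Icc.2 hab) hx hx.1
  exact nonpos_of_mul_nonpos_right (hva.trans ha) (exp_pos _)

theorem deriv_nonpos_of_ode {B q : ℝ → ℝ} {b T : ℝ} (hB : ContDiffOn ℝ 2 B (Ico 0 b))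
    (hT : T < b)
    (hsin : ∀ s ∈ Icc 0 T, sin (2 * B s) ≠ 0) (hq : ∀ s ∈ Ioo 0 T, 0 ≤ q s)
    (hode : ∀ s ∈ Ioo 0 T, deriv (deriv B) s =
      -deriv B s / s + 2 * (cos (2 * B s) / sin (2 * B s)) * deriv B s ^ 2 - q s) :
    ∀ s ∈ Ioc 0 T, deriv B s ≤ 0 := by
  have hsub : Icc 0 T ⊆ Ico 0 b := fun s hs => ⟨hs.1, hs.2.trans_lt hT⟩
  -- the one-sided derivative at `0` makes `s * B' s` continuous on `[0, T]`
  set g := derivWithin B (Ico 0 b)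
  have hg : ContDiffOn ℝ 1 g (Ico 0 b) := hB.derivWithin (uniqueDiffOn_Ico 0 b) (by norm_num)
  have hg_eq : ∀ s ∈ Ioo 0 b, g s = deriv B s := fun s hs =>
    derivWithin_of_mem_nhds (Ico_mem_nhds hs.1 hs.2)
  have hBc : ContinuousOn B (Icc 0 T) := hB.continuousOn.mono hsub
  have hc : ContinuousOn (fun s => 2 * (cos (2 * B s) / sin (2 * B s)) * g s) (Icc 0 T) :=
    (continuousOn_const.mul
      ((continuous_cos.comp_continuousOn (continuousOn_const.mul hBc)).div
        (continuous_sin.comp_continuousOn (continuousOn_const.mul hBc)) hsin)).mul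
      (hg.continuousOn.mono hsub)
  have hw' : ∀ s ∈ Ioo 0 T, HasDerivAt (fun s => s * g s)
      (2 * (cos (2 * B s) / sin (2 * B s)) * g s * (s * g s) - s * q s) s := by
    intro s hs
    have hs' : s ∈ Ioo 0 b := ⟨hs.1, hs.2.trans hT⟩
    have hgd : HasDerivAt g (deriv (deriv B) s) s := by
      have hgB : g =ᶠ[𝓝 s] deriv B := eventually_of_mem (Ioo_mem_nhds hs'.1 hs'.2) hg_eq
      rw [← hgB.deriv_eq]
      exact ((hg.differentiableOn one_ne_zero).differentiableAt
        (Ico_mem_nhds hs'.1 hs'.2)).hasDerivAt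
    refine ((hasDerivAt_id s).mul hgd).congr_deriv ?_
    rw [hode s hs, hg_eq s hs', id]
    field_simp [hs.1.ne']
    ring
  have hw := nonpos_of_hasDerivAt_eq_mul_sub (continuousOn_id.mul (hg.continuousOn.mono hsub))
    hc hw' (fun s hs => mul_nonneg hs.1.le (hq s hs)) (by simp)
  intro s hs
  rw [← hg_eq s ⟨hs.1, hs.2.trans_lt hT⟩]
  exact nonpos_of_mul_nonpos_right (hw s (Ioc_subset_Icc_self hs)) hs.1

section

variable {A B : ℝ → ℝ} {b T : ℝ}

theorem deriv_nonpos_of_le_pi_div_four (hB : ContDiffOn ℝ 2 B (Ico 0 b))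
    (hBeq : ∀ τ ∈ Ioo (0:ℝ) b, deriv (deriv B) τ = -deriv B τ / τ
      + 2 * (cos (2 * B τ) / sin (2 * B τ)) * (deriv B τ) ^ 2
      - 2 * tan (2 * B τ) * (deriv A τ) ^ 2)
    (hT : T < b) (hBpos : ∀ s ∈ Icc 0 T, 0 < B s) (hBle : ∀ s ∈ Icc 0 T, B s ≤ π / 4) :
    ∀ s ∈ Ioc 0 T, deriv B s ≤ 0 :=
  deriv_nonpos_of_ode hB hT
    (fun s hs => (sin_pos_of_pos_of_lt_pi (by linarith [hBpos s hs])
      (by linarith [hBle s hs, pi_pos])).ne')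
    (fun s hs => mul_nonneg (mul_nonneg zero_le_two (tan_nonneg_of_nonneg_of_le_pi_div_two
      (by linarith [hBpos s (Ioo_subset_Icc_self hs)])
      (by linarith [hBle s (Ioo_subset_Icc_self hs)]))) (sq_nonneg _))
    fun s hs => hBeq s ⟨hs.1, hs.2.trans hT⟩

theorem antitoneOn_of_le_pi_div_four (hB : ContDiffOn ℝ 2 B (Ico 0 b))
    (hBeq : ∀ τ ∈ Ioo (0:ℝ) b, deriv (deriv B) τ = -deriv B τ / τ
      + 2 * (cos (2 * B τ) / sin (2 * B τ)) * (deriv B τ) ^ 2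
      - 2 * tan (2 * B τ) * (deriv A τ) ^ 2)
    (hT : T < b) (hBpos : ∀ s ∈ Icc 0 T, 0 < B s) (hBle : ∀ s ∈ Icc 0 T, B s ≤ π / 4) :
    AntitoneOn B (Icc 0 T) := by
  refine antitoneOn_of_deriv_nonpos (convex_Icc 0 T)
    (hB.continuousOn.mono fun s hs => ⟨hs.1, hs.2.trans_lt hT⟩) ?_ fun s hs => ?_ <;>
    rw [interior_Icc] at *
  · exact (hB.differentiableOn two_ne_zero).mono fun s hs => ⟨hs.1.le, hs.2.trans hT⟩
  · exact deriv_nonpos_of_le_pi_div_four hB hBeq hT hBpos hBle s (Ioo_subset_Ioc_self hs)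

end

theorem B_monotone_effective_general (B₀ τstar : ℝ) (hB₀ : B₀ ∈ Set.Ioo 0 (π / 4))
    (A B : ℝ → ℝ)
    (hreg : ContDiffOn ℝ 2 A (Set.Ico 0 τstar) ∧ ContDiffOn ℝ 2 B (Set.Ico 0 τstar))
    (hBeq : ∀ τ ∈ Set.Ioo (0:ℝ) τstar,
      deriv (deriv B) τ = -deriv B τ / τ
        + 2 * (Real.cos (2 * B τ) / Real.sin (2 * B τ)) * (deriv B τ) ^ 2
        - 2 * Real.tan (2 * B τ) * (deriv A τ) ^ 2)
    (hB0 : B 0 = B₀) (hB'0 : deriv B 0 = 0)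
    (hBpos : ∀ τ ∈ Set.Ico (0:ℝ) τstar, 0 < B τ) :
    ∀ τ ∈ Set.Ico (0:ℝ) τstar, deriv B τ ≤ 0 ∧ B τ ≤ B₀ := by
  obtain ⟨-, hB⟩ := hreg
  intro t ht
  have hpos : ∀ T < τstar, ∀ s ∈ Icc 0 T, 0 < B s := fun T hT s hs =>
    hBpos s ⟨hs.1, hs.2.trans_lt hT⟩
  have hBle : ∀ s ∈ Icc 0 t, B s ≤ B₀ := by
    refine le_of_forall_Icc_le_imp_le (hB.continuousOn.mono (Icc_subset_Ico_right ht.2))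
      hB₀.2 hB0.le fun T hT hTle => ?_
    have hTb := hT.2.trans_lt ht.2
    rw [← hB0]
    exact antitoneOn_of_le_pi_div_four hB hBeq hTb (hpos T hTb) hTle
      (left_mem_Icc.2 hT.1) (right_mem_Icc.2 hT.1) hT.1
  refine ⟨?_, hBle t (right_mem_Icc.2 ht.1)⟩
  rcases ht.1.eq_or_lt with rfl | ht0
  · exact hB'0.le
  · exact deriv_nonpos_of_le_pi_div_four hB hBeq ht.2 (hpos t ht.2)
      (fun s hs => (hBle s hs).trans hB₀.2.le) t ⟨ht0, le_rfl⟩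

theorem B_monotone_effective (B₀ τstar : ℝ) (hB₀ : B₀ ∈ Set.Ioo 0 (π / 4))
    (hτ : 0 < τstar) (A B : ℝ → ℝ)
    (hreg : ContDiffOn ℝ 2 A (Set.Ico 0 τstar) ∧ ContDiffOn ℝ 2 B (Set.Ico 0 τstar))
    (hBeq : ∀ τ ∈ Set.Ioo (0:ℝ) τstar,
      deriv (deriv B) τ = -deriv B τ / τ
        + 2 * (Real.cos (2 * B τ) / Real.sin (2 * B τ)) * (deriv B τ) ^ 2
        - 2 * Real.tan (2 * B τ) * (deriv A τ) ^ 2)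
    (hAeq : ∀ τ ∈ Set.Ioo (0:ℝ) τstar,
      deriv (deriv A) τ = -deriv A τ / τ - Real.sin (4 * B τ) / (π * τ)
        + 2 * (Real.cos (2 * B τ) / Real.sin (2 * B τ)) * deriv A τ * deriv B τ
        - 2 * Real.tan (2 * B τ) * deriv A τ * deriv B τ)
    (hB0 : B 0 = B₀) (hB'0 : deriv B 0 = 0)
    (hA0 : A 0 = 0) (hA'0 : deriv A 0 = -Real.sin (4 * B₀) / π)
    (hBpos : ∀ τ ∈ Set.Ico (0:ℝ) τstar, 0 < B τ) :
    ∀ τ ∈ Set.Ico (0:ℝ) τstar, deriv B τ ≤ 0 ∧ B τ ≤ B₀ :=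
  B_monotone_effective_general B₀ τstar hB₀ A B hreg hBeq hB0 hB'0 hBpos
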